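/- arXiv:1503.01807 — 4 statements merged into one kernel-verified Lean document; each statement's English description precedes it below -/
import Mathlib

section
/- For every x ∈ H¹₀(0,1) (i.e., x absolutely continuous on [0,1] with x(0)=x(1)=0 and x' ∈ L²), the Poincaré inequality holds: ∫₀¹ x(t)² dt ≤ (1/π²) ∫₀¹ x'(t)² dt. -/
/-!
For `x` on `[a, b]` vanishing at both ends, reflect `x` oddly about `b`: the extension `y` to
`[a, 2b - a]` is periodic (as `x a = 0`), has mean zero, and its derivative is the even
reflection of `x'`; the reflection doubles both integrals. For a periodic function of period `L`,
integrating by parts against `e^{-2πint/L}` gives `ĉₙ(y) = L/(2πin) ĉₙ(y')` for `n ≠ 0`, while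
`ĉ₀(y) = 0`, so Parseval yields Wirtinger's inequality `∫ |y|² ≤ (L/2π)² ∫ |y'|²`.
With `L = 2(b - a)` this is `((b - a)/π)²`.
-/

open Set intervalIntegral MeasureTheory Real

theorem fourierCoeffOn_zero {E : Type*} [NormedAddCommGroup E] [NormedSpace ℂ E] {a b : ℝ}
    (hab : a < b) (f : ℝ → E) :
    fourierCoeffOn hab f 0 = (1 / (b - a)) • ∫ t in a..b, f t := by
  simp [fourierCoeffOn_eq_integral]

theorem norm_fourierCoeffOn_eq_of_hasDerivAt_Ioo {a b : ℝ} (hab : a < b) {f f' : ℝ → ℂ}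
    {n : ℤ} (hn : n ≠ 0) (hf : ContinuousOn f (uIcc a b))
    (hff' : ∀ t ∈ Ioo a b, HasDerivAt f (f' t) t) (hf' : IntervalIntegrable f' volume a b)
    (hfab : f a = f b) :
    ‖fourierCoeffOn hab f n‖ = (b - a) / (2 * π * |(n : ℝ)|) * ‖fourierCoeffOn hab f' n‖ := by
  rw [fourierCoeffOn_of_hasDerivAt_Ioo hab hn hf (by simpa [hab.le] using hff') hf', hfab,
    sub_self, mul_zero, zero_sub]
  have hden : ‖-2 * (π : ℂ) * Complex.I * n‖ = 2 * π * |(n : ℝ)| := by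
    simp [abs_of_pos pi_pos]
  have hba : ‖(b : ℂ) - a‖ = b - a := by
    rw [← Complex.ofReal_sub, Complex.norm_real, Real.norm_of_nonneg (sub_pos.2 hab).le]
  rw [norm_mul, norm_neg, norm_mul, norm_div, norm_one, hden, hba]
  ring

theorem norm_sq_fourierCoeffOn_le {a b : ℝ} (hab : a < b) {f f' : ℝ → ℂ}
    (hf : ContinuousOn f (uIcc a b))
    (hff' : ∀ t ∈ Ioo a b, HasDerivAt f (f' t) t) (hf' : IntervalIntegrable f' volume a b)
    (hfab : f a = f b) (hmean : ∫ t in a..b, f t = 0) (n : ℤ) :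
    ‖fourierCoeffOn hab f n‖ ^ 2 ≤ ((b - a) / (2 * π)) ^ 2 * ‖fourierCoeffOn hab f' n‖ ^ 2 := by
  rcases eq_or_ne n 0 with rfl | hn
  · rw [fourierCoeffOn_zero, hmean, smul_zero, norm_zero, zero_pow two_ne_zero]
    positivity
  have hn1 : (1 : ℝ) ≤ |(n : ℝ)| := by exact_mod_cast Int.one_le_abs hn
  have hba := sub_pos.2 hab
  have hfactor : (b - a) / (2 * π * |(n : ℝ)|) ≤ (b - a) / (2 * π) :=
    div_le_div_of_nonneg_left hba.le (by positivity) (le_mul_of_one_le_right (by positivity) hn1)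
  rw [norm_fourierCoeffOn_eq_of_hasDerivAt_Ioo hab hn hf hff' hf' hfab, mul_pow]
  gcongr

theorem ContinuousOn.memLp_two_restrict_Ioc {E : Type*} [NormedAddCommGroup E] {a b : ℝ}
    {f : ℝ → E} (hf : ContinuousOn f (Icc a b)) :
    MemLp f 2 (volume.restrict (Ioc a b)) := by
  rw [memLp_two_iff_integrable_sq_norm
    ((hf.mono Ioc_subset_Icc_self).aestronglyMeasurable measurableSet_Ioc)]
  exact ((hf.norm.pow 2).integrableOn_Icc).mono_set Ioc_subset_Icc_self

theorem wirtinger_inequality {a b : ℝ} (hab : a < b) {f f' : ℝ → ℂ}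
    (hf : ContinuousOn f (Icc a b)) (hff' : ∀ t ∈ Ioo a b, HasDerivAt f (f' t) t)
    (hf' : MemLp f' 2 (volume.restrict (Ioc a b)))
    (hfab : f a = f b) (hmean : ∫ t in a..b, f t = 0) :
    ∫ t in a..b, ‖f t‖ ^ 2 ≤ ((b - a) / (2 * π)) ^ 2 * ∫ t in a..b, ‖f' t‖ ^ 2 := by
  have hf'int : IntervalIntegrable f' volume a b :=
    (intervalIntegrable_iff_integrableOn_Ioc_of_le hab.le).2 (hf'.integrable one_le_two)
  have hcoeff := norm_sq_fourierCoeffOn_le hab (by rwa [uIcc_of_le hab.le]) hff' hf'int hfab hmean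
  have hparseval := hasSum_le hcoeff (hasSum_sq_fourierCoeffOn hab hf.memLp_two_restrict_Ioc)
    ((hasSum_sq_fourierCoeffOn hab hf').mul_left _)
  rw [smul_eq_mul, smul_eq_mul, mul_left_comm] at hparseval
  exact le_of_mul_le_mul_left hparseval (inv_pos.2 (sub_pos.2 hab))

section

variable {E : Type*} [NormedAddCommGroup E] {a b : ℝ} {φ g h : ℝ → E}

theorem IntervalIntegrable.of_eqOn_reflect (hab : a ≤ b) (hg : IntervalIntegrable g volume a b)
    (hh : IntervalIntegrable h volume a b) (hφg : EqOn φ g (Icc a b))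
    (hφh : EqOn φ (fun t => h (2 * b - t)) (Icc b (2 * b - a))) :
    IntervalIntegrable φ volume a (2 * b - a) := by
  have hleft : IntervalIntegrable φ volume a b :=
    hg.congr (hφg.symm.mono (by rw [uIoc_of_le hab]; exact Ioc_subset_Icc_self))
  have hright : IntervalIntegrable φ volume b (2 * b - a) := by
    have := (hh.comp_sub_left (2 * b)).symm
    rw [show 2 * b - b = b by ring] at this
    exact this.congr (hφh.symm.mono (by rw [uIoc_of_le (by linarith)]; exact Ioc_subset_Icc_self))
  exact hleft.trans hright

theorem integral_eq_add_of_eqOn_reflect [NormedSpace ℝ E] (hab : a ≤ b)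
    (hg : IntervalIntegrable g volume a b) (hh : IntervalIntegrable h volume a b)
    (hφg : EqOn φ g (Icc a b)) (hφh : EqOn φ (fun t => h (2 * b - t)) (Icc b (2 * b - a))) :
    ∫ t in a..(2 * b - a), φ t = (∫ t in a..b, g t) + ∫ t in a..b, h t := by
  have hφ := IntervalIntegrable.of_eqOn_reflect hab hg hh hφg hφh
  have hba : b ≤ 2 * b - a := by linarith
  have hb : b ∈ uIcc a (2 * b - a) := mem_uIcc_of_le hab hba
  rw [← integral_add_adjacent_intervals (hφ.mono_set (uIcc_subset_uIcc_left hb))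
    (hφ.mono_set (uIcc_subset_uIcc_right hb)),
    integral_congr (hφg.mono (uIcc_of_le hab).subset),
    integral_congr (hφh.mono (uIcc_of_le hba).subset),
    integral_comp_sub_left (fun t => h t) (2 * b)]
  congr 2 <;> ring

end

noncomputable section

def oddReflection (b : ℝ) (x : ℝ → ℝ) (t : ℝ) : ℝ := if t ≤ b then x t else -x (2 * b - t)

def evenReflection (b : ℝ) (x : ℝ → ℝ) (t : ℝ) : ℝ := if t ≤ b then x t else x (2 * b - t)

end

section

variable {b t : ℝ} {x : ℝ → ℝ}

theorem oddReflection_of_le (ht : t ≤ b) : oddReflection b x t = x t := if_pos ht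

theorem oddReflection_of_ge (hxb : x b = 0) (ht : b ≤ t) :
    oddReflection b x t = -x (2 * b - t) := by
  rcases ht.eq_or_lt with rfl | ht
  · simp [oddReflection, hxb, show 2 * b - b = b by ring]
  · exact if_neg ht.not_ge

theorem evenReflection_of_le (ht : t ≤ b) : evenReflection b x t = x t := if_pos ht

theorem evenReflection_of_ge (ht : b ≤ t) : evenReflection b x t = x (2 * b - t) := by
  rcases ht.eq_or_lt with rfl | ht
  · simp [evenReflection, show 2 * b - b = b by ring]
  · exact if_neg ht.not_ge

theorem oddReflection_sq : oddReflection b x t ^ 2 = evenReflection b (fun s => x s ^ 2) t := by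
  unfold oddReflection evenReflection
  split_ifs <;> simp only [neg_sq]

theorem evenReflection_sq : evenReflection b x t ^ 2 = evenReflection b (fun s => x s ^ 2) t := by
  unfold evenReflection
  split_ifs <;> rfl

variable {a : ℝ}

theorem IntervalIntegrable.evenReflection (hab : a ≤ b) (hx : IntervalIntegrable x volume a b) :
    IntervalIntegrable (evenReflection b x) volume a (2 * b - a) :=
  .of_eqOn_reflect hab hx hx (fun _ ht => evenReflection_of_le ht.2)
    (fun _ ht => evenReflection_of_ge ht.1)

theorem integral_evenReflection (hab : a ≤ b) (hx : IntervalIntegrable x volume a b) :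
    ∫ t in a..(2 * b - a), evenReflection b x t = 2 * ∫ t in a..b, x t := by
  rw [integral_eq_add_of_eqOn_reflect hab hx hx (fun _ ht => evenReflection_of_le ht.2)
    (fun _ ht => evenReflection_of_ge ht.1), two_mul]

theorem integral_oddReflection (hab : a ≤ b) (hxb : x b = 0)
    (hx : IntervalIntegrable x volume a b) :
    ∫ t in a..(2 * b - a), oddReflection b x t = 0 := by
  rw [integral_eq_add_of_eqOn_reflect hab hx (h := fun t => -x t) hx.neg
    (fun _ ht => oddReflection_of_le ht.2)
    (fun _ ht => oddReflection_of_ge hxb ht.1), intervalIntegral.integral_neg, add_neg_cancel]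

end

theorem hasDerivAt_oddReflection {a b : ℝ} {x x' : ℝ → ℝ}
    (hderiv : ∀ t ∈ Icc a b, HasDerivAt x (x' t) t) (hxb : x b = 0) {t : ℝ}
    (ht : t ∈ Icc a (2 * b - a)) :
    HasDerivAt (oddReflection b x) (evenReflection b x' t) t := by
  have hrefl : ∀ s, 2 * b - s ∈ Icc a b →
      HasDerivAt (fun u => -x (2 * b - u)) (x' (2 * b - s)) s := fun s hs => by
    have := ((hderiv _ hs).comp s ((hasDerivAt_id s).const_sub (2 * b))).neg
    rw [mul_neg, mul_one, neg_neg] at this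
    exact this
  rcases lt_trichotomy t b with htb | htb | htb
  · rw [evenReflection_of_le htb.le]
    refine (hderiv t ⟨ht.1, htb.le⟩).congr_of_eventuallyEq ?_
    filter_upwards [Iio_mem_nhds htb] with s hs using oddReflection_of_le hs.le
  · subst htb
    have h2t : 2 * t - t = t := by ring
    have hleft : HasDerivWithinAt (oddReflection t x) (x' t) (Iic t) t :=
      (hderiv t ⟨ht.1, le_rfl⟩).hasDerivWithinAt.congr_of_mem
        (fun s hs => oddReflection_of_le hs) self_mem_Iic
    have hright : HasDerivWithinAt (oddReflection t x) (x' (2 * t - t)) (Ici t) t :=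
      (hrefl t (by rw [h2t]; exact ⟨ht.1, le_rfl⟩)).hasDerivWithinAt.congr_of_mem
        (fun s hs => oddReflection_of_ge hxb hs) self_mem_Ici
    rw [h2t] at hright
    rw [evenReflection_of_le le_rfl, ← hasDerivWithinAt_univ, ← Iic_union_Ici]
    exact hleft.union hright
  · rw [evenReflection_of_ge htb.le]
    refine (hrefl t ⟨by linarith [ht.2], by linarith⟩).congr_of_eventuallyEq ?_
    filter_upwards [Ioi_mem_nhds htb] with s hs using oddReflection_of_ge hxb hs.le

theorem memLp_two_of_hasDerivAt {a b : ℝ} {φ φ' : ℝ → ℝ}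
    (hderiv : ∀ t ∈ Ioc a b, HasDerivAt φ (φ' t) t)
    (hL2 : IntervalIntegrable (fun t => φ' t ^ 2) volume a b) :
    MemLp φ' 2 (volume.restrict (Ioc a b)) := by
  have hmeas : AEStronglyMeasurable φ' (volume.restrict (Ioc a b)) :=
    (measurable_deriv φ).aestronglyMeasurable.congr <|
      ae_restrict_of_forall_mem measurableSet_Ioc fun t ht => (hderiv t ht).deriv
  exact (memLp_two_iff_integrable_sq hmeas).2 hL2.1

theorem poincare_inequality_dirichlet {a b : ℝ} (hab : a < b) {x x' : ℝ → ℝ}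
    (hderiv : ∀ t ∈ Icc a b, HasDerivAt x (x' t) t) (hxa : x a = 0) (hxb : x b = 0)
    (hL2 : IntervalIntegrable (fun t => x' t ^ 2) volume a b) :
    ∫ t in a..b, x t ^ 2 ≤ ((b - a) / π) ^ 2 * ∫ t in a..b, x' t ^ 2 := by
  have hbc : b < 2 * b - a := by linarith
  have hderivR : ∀ t ∈ Icc a (2 * b - a),
      HasDerivAt (oddReflection b x) (evenReflection b x' t) t :=
    fun t ht => hasDerivAt_oddReflection hderiv hxb ht
  have hx : ContinuousOn x (uIcc a b) := fun t ht =>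
    (hderiv t (by rwa [uIcc_of_le hab.le] at ht)).continuousAt.continuousWithinAt
  have hL2R : MemLp (evenReflection b x') 2 (volume.restrict (Ioc a (2 * b - a))) := by
    refine memLp_two_of_hasDerivAt (fun t ht => hderivR t (Ioc_subset_Icc_self ht)) ?_
    simpa only [evenReflection_sq] using hL2.evenReflection hab.le
  have hW := wirtinger_inequality (by linarith : a < 2 * b - a)
    (f := fun t => (oddReflection b x t : ℂ)) (f' := fun t => (evenReflection b x' t : ℂ))
    (fun t ht => (Complex.continuous_ofReal.continuousAt.comp
      (hderivR t ht).continuousAt).continuousWithinAt)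
    (fun t ht => (hderivR t (Ioo_subset_Icc_self ht)).ofReal_comp) hL2R.ofReal
    (by simp [oddReflection_of_le hab.le, oddReflection_of_ge hxb hbc.le, hxa])
    (by rw [intervalIntegral.integral_ofReal, integral_oddReflection hab.le hxb hx.intervalIntegrable,
      Complex.ofReal_zero])
  simp only [Complex.norm_real, Real.norm_eq_abs, sq_abs, oddReflection_sq, evenReflection_sq] at hW
  rw [integral_evenReflection (x := fun s => x s ^ 2) hab.le (hx.pow 2).intervalIntegrable,
    integral_evenReflection hab.le hL2] at hW
  have hconst : (2 * b - a - a) / (2 * π) = (b - a) / π := by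
    field_simp
    ring
  rw [hconst] at hW
  linarith

theorem stmt3 (x x' : ℝ → ℝ)
    (hderiv : ∀ t ∈ Icc (0:ℝ) 1, HasDerivAt x (x' t) t)
    (hx0 : x 0 = 0) (hx1 : x 1 = 0)
    (hL2 : IntervalIntegrable (fun t => (x' t)^2) MeasureTheory.volume 0 1) :
    (∫ t in (0:ℝ)..1, (x t)^2) ≤ (1 / Real.pi^2) * ∫ t in (0:ℝ)..1, (x' t)^2 := by
  simpa [div_pow] using poincare_inequality_dirichlet zero_lt_one hderiv hx0 hx1 hL2
end

section
/- Let n ∈ ℕ and x : {0,1,...,n} → ℝ with x(0) = x(n) = 0. Then max_{0 ≤ k ≤ n} |x(k)| ≤ (√(n+1)/2) (Σ_{k=1}^n |x(k)−x(k−1)|²)^{1/2}. -/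
/-!
Split the squared differences at `k` into the part `A` before `k` and the part `B` after it.
Telescoping and Cauchy–Schwarz give `x k ^ 2 ≤ k * A` and `x k ^ 2 ≤ (n - k) * B`, and combining
the two by AM–GM yields `4 * x k ^ 2 ≤ n * (A + B)`.
-/

open Finset

section

variable {R : Type*} [CommRing R] [LinearOrder R] [IsStrictOrderedRing R]

lemma sq_sub_le_mul_sum_sq_forward_diff (x : ℕ → R) {a b : ℕ} (hab : a ≤ b) :
    (x b - x a) ^ 2 ≤ (b - a : ℕ) * ∑ i ∈ Ico a b, (x (i + 1) - x i) ^ 2 := by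
  rw [← sum_Ico_sub x hab, ← Nat.card_Ico]
  exact sq_sum_le_card_mul_sum_sq

lemma four_mul_le_add_mul_add {y p q A B : R} (hp : 0 ≤ p) (hq : 0 ≤ q) (hA : 0 ≤ A)
    (hB : 0 ≤ B) (hpA : y ≤ p * A) (hqB : y ≤ q * B) : 4 * y ≤ (p + q) * (A + B) := by
  rcases lt_or_ge y 0 with hy | hy
  · nlinarith [mul_nonneg (add_nonneg hp hq) (add_nonneg hA hB)]
  -- AM–GM: `(p B + q A)² ≥ 4 (p A) (q B) ≥ 4 y²`.
  have hcross : 2 * y ≤ p * B + q * A := by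
    nlinarith [mul_nonneg hp hB, mul_nonneg hq hA, sq_nonneg (p * B - q * A),
      mul_le_mul hpA hqB hy (mul_nonneg hp hA)]
  nlinarith

end

theorem stmt8 (n : ℕ) (x : ℕ → ℝ) (hx0 : x 0 = 0) (hxn : x n = 0) :
    ∀ k ≤ n, |x k| ≤ (Real.sqrt ((n:ℝ) + 1) / 2)
      * Real.sqrt (∑ k ∈ Finset.Icc 1 n, (x k - x (k-1))^2) := by
  intro k hk
  have hS : ∑ k ∈ Icc 1 n, (x k - x (k - 1)) ^ 2 = ∑ i ∈ range n, (x (i + 1) - x i) ^ 2 := by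
    rw [← Ico_add_one_right_eq_Icc, sum_Ico_eq_sum_range]
    simp [add_comm]
  set A := ∑ i ∈ range k, (x (i + 1) - x i) ^ 2
  set B := ∑ i ∈ Ico k n, (x (i + 1) - x i) ^ 2
  have hAB : A + B = ∑ i ∈ range n, (x (i + 1) - x i) ^ 2 := sum_range_add_sum_Ico _ hk
  have hA0 : 0 ≤ A := sum_nonneg fun _ _ => sq_nonneg _
  have hB0 : 0 ≤ B := sum_nonneg fun _ _ => sq_nonneg _
  have hA : x k ^ 2 ≤ k * A := by
    simpa [hx0] using sq_sub_le_mul_sum_sq_forward_diff x (Nat.zero_le k)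
  have hB : x k ^ 2 ≤ (n - k : ℕ) * B := by
    simpa [hxn] using sq_sub_le_mul_sum_sq_forward_diff x hk
  have hsq : 4 * x k ^ 2 ≤ n * (A + B) := by
    have := four_mul_le_add_mul_add (Nat.cast_nonneg _) (Nat.cast_nonneg _) hA0 hB0 hA hB
    rwa [← Nat.cast_add, Nat.add_sub_cancel' hk] at this
  rw [hS, ← hAB]
  apply abs_le_of_sq_le_sq _ (by positivity)
  rw [mul_pow, div_pow, Real.sq_sqrt (by positivity), Real.sq_sqrt (by positivity)]
  nlinarith
end

section
/- Let n ≥ 2, c > 0, and let f : [0,1] × ℝ → ℝ be continuous, nondecreasing in x, with |f(t,0)| ≤ c for all t. Define F(t,x) = ∫₀ˣ f(t,s)ds and I(x) = Σ_{k=1}^n (1/2)|Δx(k−1)|² + (1/n²) Σ_{k=1}^{n−1} F(k/n, x(k)) on the space E of sequences x : {0,...,n} → ℝ with x(0)=x(n)=0. Then I(x) ≥ (1/2)‖x‖² − c (√(n−1)/n) ‖x‖ ≥ (1/2)‖x‖² − c‖x‖, where ‖x‖² = Σ_{k=1}^n |Δx(k−1)|². -/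
/-!
Monotonicity of `f t` makes `F t` lie above its tangent line at `0`, so
`F(t, y) ≥ y f(t, 0) ≥ -c |y|`. Writing `x k` as the telescoping sum of its increments,
Cauchy–Schwarz gives `|x k| ≤ √k ‖x‖ ≤ √(n - 1) ‖x‖` for `k < n`; the at most `n` potential
terms, weighted by `1 / n²`, therefore contribute at least `-c √(n - 1) / n · ‖x‖`.
The second inequality is `√(n - 1) ≤ n`.
-/

open Finset intervalIntegral

lemma Monotone.sub_mul_le_integral {g : ℝ → ℝ} (hg : Monotone g) (a b : ℝ) :
    (b - a) * g a ≤ ∫ s in a..b, g s := by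
  rcases le_total a b with hab | hba
  · calc (b - a) * g a = ∫ _ in a..b, g a := by simp
      _ ≤ ∫ s in a..b, g s :=
        integral_mono_on hab intervalIntegrable_const hg.intervalIntegrable
          fun s hs => hg hs.1
  · have h : ∫ s in b..a, g s ≤ ∫ _ in b..a, g a :=
      integral_mono_on hba hg.intervalIntegrable intervalIntegrable_const fun s hs => hg hs.2
    rw [integral_symm]
    simp only [integral_const, smul_eq_mul] at h
    linarith

lemma Monotone.neg_mul_abs_le_integral {g : ℝ → ℝ} (hg : Monotone g) {c : ℝ} (hc : |g 0| ≤ c)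
    (y : ℝ) : -(c * |y|) ≤ ∫ s in (0:ℝ)..y, g s := by
  have h := hg.sub_mul_le_integral 0 y
  rw [sub_zero] at h
  have : |y * g 0| ≤ c * |y| := by
    rw [abs_mul, mul_comm]
    exact mul_le_mul_of_nonneg_right hc (abs_nonneg y)
  linarith [neg_abs_le (y * g 0)]

lemma eq_sum_Icc_sub_of_eq_zero {x : ℕ → ℝ} (hx0 : x 0 = 0) (k : ℕ) :
    x k = ∑ i ∈ Icc 1 k, (x i - x (i - 1)) := by
  induction k with
  | zero => simp [hx0]
  | succ k ih => rw [sum_Icc_succ_top (by omega), ← ih]; simp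

lemma sq_le_mul_sum_sq_sub_of_eq_zero {x : ℕ → ℝ} (hx0 : x 0 = 0) (k : ℕ) :
    x k ^ 2 ≤ k * ∑ i ∈ Icc 1 k, (x i - x (i - 1)) ^ 2 := by
  rw [eq_sum_Icc_sub_of_eq_zero hx0 k]
  simpa using sq_sum_le_card_mul_sum_sq (s := Icc 1 k) (f := fun i => x i - x (i - 1))

lemma abs_le_sqrt_mul_sqrt_sum_sq_sub {x : ℕ → ℝ} (hx0 : x 0 = 0) {k n : ℕ} (hkn : k ≤ n) :
    |x k| ≤ √k * √(∑ i ∈ Icc 1 n, (x i - x (i - 1)) ^ 2) := by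
  rw [← Real.sqrt_mul (Nat.cast_nonneg k)]
  refine Real.abs_le_sqrt ((sq_le_mul_sum_sq_sub_of_eq_zero hx0 k).trans ?_)
  gcongr

lemma one_div_sq_mul_mul {K : Type*} [Field K] (r a : K) : 1 / r ^ 2 * (r * a) = a / r := by
  rcases eq_or_ne r 0 with rfl | hr
  · simp
  · field_simp

lemma neg_mul_sqrt_le_integral {f : ℝ → ℝ → ℝ} {c : ℝ} (hc : 0 ≤ c)
    (hmono : ∀ t ∈ Set.Icc (0:ℝ) 1, Monotone (f t))
    (hbound : ∀ t ∈ Set.Icc (0:ℝ) 1, |f t 0| ≤ c)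
    {x : ℕ → ℝ} (hx0 : x 0 = 0) {k n : ℕ} (hkn : k < n) :
    -(c * (√((n:ℝ) - 1) * √(∑ i ∈ Icc 1 n, (x i - x (i - 1)) ^ 2)))
      ≤ ∫ s in (0:ℝ)..(x k), f ((k:ℝ) / n) s := by
  have hk : (k:ℝ) ≤ n - 1 := by
    rw [le_sub_iff_add_le]; exact_mod_cast hkn
  have ht : (k:ℝ) / n ∈ Set.Icc (0:ℝ) 1 :=
    ⟨by positivity, div_le_one_of_le₀ (by linarith) (by positivity)⟩
  have hxk := (abs_le_sqrt_mul_sqrt_sum_sq_sub hx0 hkn.le).trans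
    (mul_le_mul_of_nonneg_right (Real.sqrt_le_sqrt hk) (Real.sqrt_nonneg _))
  have := (hmono _ ht).neg_mul_abs_le_integral (hbound _ ht) (x k)
  nlinarith

lemma neg_mul_sqrt_div_le_sum_integral {f : ℝ → ℝ → ℝ} {c : ℝ} (hc : 0 ≤ c)
    (hmono : ∀ t ∈ Set.Icc (0:ℝ) 1, Monotone (f t))
    (hbound : ∀ t ∈ Set.Icc (0:ℝ) 1, |f t 0| ≤ c)
    {x : ℕ → ℝ} (hx0 : x 0 = 0) (n : ℕ) :
    -(c * (√((n:ℝ) - 1) / n) * √(∑ i ∈ Icc 1 n, (x i - x (i - 1)) ^ 2))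
      ≤ 1 / (n:ℝ) ^ 2 * ∑ k ∈ Icc 1 (n - 1), ∫ s in (0:ℝ)..(x k), f ((k:ℝ) / n) s := by
  set A := c * (√((n:ℝ) - 1) * √(∑ i ∈ Icc 1 n, (x i - x (i - 1)) ^ 2))
  have hsum : -(n * A) ≤ ∑ k ∈ Icc 1 (n - 1), ∫ s in (0:ℝ)..(x k), f ((k:ℝ) / n) s := by
    refine le_trans ?_ (card_nsmul_le_sum _ _ _ fun k hk =>
      neg_mul_sqrt_le_integral hc hmono hbound hx0 (by obtain ⟨h1, h2⟩ := mem_Icc.mp hk; omega))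
    have hcard : ((Icc 1 (n - 1)).card : ℝ) ≤ n := by simp
    rw [nsmul_eq_mul, mul_neg, neg_le_neg_iff]
    exact mul_le_mul_of_nonneg_right hcard (by positivity)
  have := mul_le_mul_of_nonneg_left hsum (by positivity : (0:ℝ) ≤ 1 / (n:ℝ) ^ 2)
  rw [mul_neg, one_div_sq_mul_mul] at this
  linarith [show c * (√((n:ℝ) - 1) / n) * √(∑ i ∈ Icc 1 n, (x i - x (i - 1)) ^ 2) = A / n by ring]

theorem stmt9_general (n : ℕ) (c : ℝ)
    (f : ℝ → ℝ → ℝ)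
    (hmono : ∀ t ∈ Set.Icc (0:ℝ) 1, Monotone (f t))
    (hbound : ∀ t ∈ Set.Icc (0:ℝ) 1, |f t 0| ≤ c)
    (x : ℕ → ℝ) (hx0 : x 0 = 0) :
    ((∑ k ∈ Finset.Icc 1 n, (1/2) * (x k - x (k-1))^2)
        + (1/(n:ℝ)^2) * ∑ k ∈ Finset.Icc 1 (n-1),
            (∫ s in (0:ℝ)..(x k), f ((k:ℝ)/n) s)
      ≥ (1/2) * (Real.sqrt (∑ k ∈ Finset.Icc 1 n, (x k - x (k-1))^2))^2
        - c * (Real.sqrt ((n:ℝ) - 1) / n)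
          * Real.sqrt (∑ k ∈ Finset.Icc 1 n, (x k - x (k-1))^2))
    ∧ ((1/2) * (Real.sqrt (∑ k ∈ Finset.Icc 1 n, (x k - x (k-1))^2))^2
        - c * (Real.sqrt ((n:ℝ) - 1) / n)
          * Real.sqrt (∑ k ∈ Finset.Icc 1 n, (x k - x (k-1))^2)
      ≥ (1/2) * (Real.sqrt (∑ k ∈ Finset.Icc 1 n, (x k - x (k-1))^2))^2
        - c * Real.sqrt (∑ k ∈ Finset.Icc 1 n, (x k - x (k-1))^2)) := by
  set S := ∑ k ∈ Finset.Icc 1 n, (x k - x (k-1))^2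
  have hc : 0 ≤ c := (abs_nonneg _).trans (hbound 0 ⟨le_rfl, zero_le_one⟩)
  have hratio : √((n:ℝ) - 1) / n ≤ 1 :=
    div_le_one_of_le₀ (Real.sqrt_le_iff.mpr ⟨by positivity, by nlinarith⟩) (by positivity)
  have hhalf : ∑ k ∈ Icc 1 n, 1 / 2 * (x k - x (k - 1)) ^ 2 = 1 / 2 * √S ^ 2 := by
    rw [← mul_sum, Real.sq_sqrt (sum_nonneg fun _ _ => sq_nonneg _)]
  rw [hhalf]
  constructor
  · linarith [neg_mul_sqrt_div_le_sum_integral hc hmono hbound hx0 n]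
  · linarith [mul_le_mul_of_nonneg_right (mul_le_of_le_one_right hc hratio) (Real.sqrt_nonneg S)]

theorem stmt9 (n : ℕ) (hn : 2 ≤ n) (c : ℝ) (hc : 0 < c)
    (f : ℝ → ℝ → ℝ) (hf : Continuous (Function.uncurry f))
    (hmono : ∀ t ∈ Set.Icc (0:ℝ) 1, Monotone (f t))
    (hbound : ∀ t ∈ Set.Icc (0:ℝ) 1, |f t 0| ≤ c)
    (x : ℕ → ℝ) (hx0 : x 0 = 0) (hxn : x n = 0) :
    ((∑ k ∈ Finset.Icc 1 n, (1/2) * (x k - x (k-1))^2)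
        + (1/(n:ℝ)^2) * ∑ k ∈ Finset.Icc 1 (n-1),
            (∫ s in (0:ℝ)..(x k), f ((k:ℝ)/n) s)
      ≥ (1/2) * (Real.sqrt (∑ k ∈ Finset.Icc 1 n, (x k - x (k-1))^2))^2
        - c * (Real.sqrt ((n:ℝ) - 1) / n)
          * Real.sqrt (∑ k ∈ Finset.Icc 1 n, (x k - x (k-1))^2))
    ∧ ((1/2) * (Real.sqrt (∑ k ∈ Finset.Icc 1 n, (x k - x (k-1))^2))^2
        - c * (Real.sqrt ((n:ℝ) - 1) / n)
          * Real.sqrt (∑ k ∈ Finset.Icc 1 n, (x k - x (k-1))^2)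
      ≥ (1/2) * (Real.sqrt (∑ k ∈ Finset.Icc 1 n, (x k - x (k-1))^2))^2
        - c * Real.sqrt (∑ k ∈ Finset.Icc 1 n, (x k - x (k-1))^2)) :=
  stmt9_general n c f hmono hbound x hx0
end

section
/- Let n ≥ 2, a, b > 0, γ ∈ [0,1), and suppose F : [0,1] × ℝ → ℝ satisfies F(t,x) ≥ −a|x| − (b/(γ+1))|x|^{γ+1}. Then the functional I(x) = Σ_{k=1}^n (1/2)|Δx(k−1)|² + (1/n²)Σ_{k=1}^{n−1} F(k/n, x(k)) on sequences x with x(0)=x(n)=0 satisfies I(x) ≥ (1/2)‖x‖² − a(√(n−1)/n)‖x‖ − (b/(γ+1)) n^{(γ−1)/2} ‖x‖^{γ+1}, where ‖x‖² = Σ_{k=1}^n |Δx(k−1)|². -/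
/-!
Since `x 0 = 0`, telescoping and Cauchy–Schwarz give `|x k| ≤ √k ‖x‖ ≤ √n ‖x‖` at every node.
Feeding this into the growth bound on `F` at the `n - 1` interior nodes and dividing by `n²`
leaves the factors `(n - 1) √n / n² ≤ √(n - 1) / n` and
`(n - 1) n^((γ + 1) / 2) / n² ≤ n^((γ - 1) / 2)`.
-/

open Finset

theorem sum_Icc_one_sub_pred {G : Type*} [AddCommGroup G] (x : ℕ → G) (k : ℕ) :
    ∑ j ∈ Icc 1 k, (x j - x (j - 1)) = x k - x 0 := by
  induction k with
  | zero => simp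
  | succ k ih =>
    rw [sum_Icc_succ_top (by omega), ih, Nat.add_sub_cancel]
    abel

theorem sq_le_mul_sum_sq_sub_pred {x : ℕ → ℝ} (hx0 : x 0 = 0) (k : ℕ) :
    x k ^ 2 ≤ k * ∑ j ∈ Icc 1 k, (x j - x (j - 1)) ^ 2 := by
  have h := sq_sum_le_card_mul_sum_sq (s := Icc 1 k) (f := fun j ↦ x j - x (j - 1))
  rwa [sum_Icc_one_sub_pred, hx0, sub_zero, Nat.card_Icc, Nat.add_sub_cancel] at h

theorem abs_le_sqrt_mul_sqrt_sum_sq_sub_pred {x : ℕ → ℝ} (hx0 : x 0 = 0) {k n : ℕ}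
    (hkn : k ≤ n) :
    |x k| ≤ √n * √(∑ j ∈ Icc 1 n, (x j - x (j - 1)) ^ 2) := by
  rw [← Real.sqrt_mul (Nat.cast_nonneg n), ← Real.sqrt_sq_eq_abs]
  refine Real.sqrt_le_sqrt ((sq_le_mul_sum_sq_sub_pred hx0 k).trans ?_)
  gcongr

theorem neg_mul_sub_mul_rpow_le {a c p M y : ℝ} (ha : 0 ≤ a) (hc : 0 ≤ c) (hp : 0 ≤ p)
    (hy : |y| ≤ M) : -a * M - c * M ^ p ≤ -a * |y| - c * |y| ^ p := by
  have := Real.rpow_le_rpow (abs_nonneg y) hy hp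
  nlinarith [mul_le_mul_of_nonneg_left hy ha, mul_le_mul_of_nonneg_left this hc]

theorem sub_one_div_sq_mul_sqrt_le {t : ℝ} (ht : 1 ≤ t) :
    (t - 1) / t ^ 2 * √t ≤ √(t - 1) / t := by
  have ht0 : 0 < t := by linarith
  have key : (t - 1) * √t ≤ t * √(t - 1) := by
    calc (t - 1) * √t = √(t - 1) * (√(t - 1) * √t) := by
          rw [← mul_assoc, Real.mul_self_sqrt (by linarith)]
      _ ≤ √(t - 1) * (√t * √t) := by gcongr; linarith
      _ = t * √(t - 1) := by rw [Real.mul_self_sqrt ht0.le, mul_comm]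
  rw [div_mul_eq_mul_div, div_le_div_iff₀ (by positivity) ht0]
  nlinarith

theorem sub_one_div_sq_mul_sqrt_rpow_le {t : ℝ} (ht : 0 < t) (p : ℝ) :
    (t - 1) / t ^ 2 * √t ^ (p + 1) ≤ t ^ ((p - 1) / 2) := by
  have hsplit : √t ^ (p + 1) = t ^ ((p - 1) / 2) * t := by
    rw [Real.sqrt_eq_rpow, ← Real.rpow_mul ht.le, ← Real.rpow_add_one ht.ne']
    ring_nf
  rw [hsplit]
  calc (t - 1) / t ^ 2 * (t ^ ((p - 1) / 2) * t) = (t - 1) / t * t ^ ((p - 1) / 2) := by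
        field_simp
    _ ≤ t ^ ((p - 1) / 2) :=
        mul_le_of_le_one_left (by positivity) ((div_le_one ht).2 (by linarith))

theorem stmt14_general (n : ℕ) (hn : 2 ≤ n) (a b : ℝ) (ha : 0 < a) (hb : 0 < b)
    (γ : ℝ) (hγ : γ ∈ Set.Ico (0:ℝ) 1)
    (F : ℝ → ℝ → ℝ)
    (hF : ∀ t ∈ Set.Icc (0:ℝ) 1, ∀ x : ℝ,
      F t x ≥ -a * |x| - (b/(γ+1)) * |x| ^ (γ+1))
    (x : ℕ → ℝ) (hx0 : x 0 = 0) :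
    (∑ k ∈ Finset.Icc 1 n, (1/2) * (x k - x (k-1))^2)
        + (1/(n:ℝ)^2) * ∑ k ∈ Finset.Icc 1 (n-1), F ((k:ℝ)/n) (x k)
      ≥ (1/2) * (Real.sqrt (∑ k ∈ Finset.Icc 1 n, (x k - x (k-1))^2))^2
        - a * (Real.sqrt ((n:ℝ) - 1) / n)
          * Real.sqrt (∑ k ∈ Finset.Icc 1 n, (x k - x (k-1))^2)
        - (b/(γ+1)) * (n:ℝ) ^ ((γ - 1)/2)
          * (Real.sqrt (∑ k ∈ Finset.Icc 1 n, (x k - x (k-1))^2)) ^ (γ+1) := by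
  have hγ0 : 0 ≤ γ + 1 := by linarith [hγ.1]
  have hn1 : (1 : ℝ) ≤ n := by exact_mod_cast (by omega : 1 ≤ n)
  set c := b / (γ + 1)
  set S := ∑ k ∈ Icc 1 n, (x k - x (k - 1)) ^ 2
  set M := √n * √S
  have hF_sum : ((n : ℝ) - 1) * (-a * M - c * M ^ (γ + 1))
      ≤ ∑ k ∈ Icc 1 (n - 1), F (k / n) (x k) := by
    have h := card_nsmul_le_sum (Icc 1 (n - 1)) (fun k ↦ F (k / n) (x k))
      (-a * M - c * M ^ (γ + 1)) fun k hk ↦ ?_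
    · rwa [nsmul_eq_mul, Nat.card_Icc, Nat.add_sub_cancel, Nat.cast_sub (by omega),
        Nat.cast_one] at h
    · rw [mem_Icc] at hk
      have hkn : k ≤ n := by omega
      have ht : (k : ℝ) / n ∈ Set.Icc 0 1 :=
        ⟨by positivity, div_le_one_of_le₀ (by exact_mod_cast hkn) (by positivity)⟩
      exact (neg_mul_sub_mul_rpow_le ha.le (by positivity) hγ0
        (abs_le_sqrt_mul_sqrt_sum_sq_sub_pred hx0 hkn)).trans (hF _ ht _)
  have hM_rpow : M ^ (γ + 1) = √n ^ (γ + 1) * √S ^ (γ + 1) :=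
    Real.mul_rpow (Real.sqrt_nonneg _) (Real.sqrt_nonneg _)
  have hS : ∑ k ∈ Icc 1 n, 1 / 2 * (x k - x (k - 1)) ^ 2 = 1 / 2 * √S ^ 2 := by
    rw [Real.sq_sqrt (sum_nonneg fun _ _ ↦ sq_nonneg _), mul_sum]
  rw [ge_iff_le, hS]
  calc _ ≤ 1 / 2 * √S ^ 2 - a * ((n - 1) / n ^ 2 * √n) * √S
        - c * ((n - 1) / n ^ 2 * √n ^ (γ + 1)) * √S ^ (γ + 1) := by
        gcongr
        · exact sub_one_div_sq_mul_sqrt_le hn1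
        · exact sub_one_div_sq_mul_sqrt_rpow_le (by positivity) γ
    _ = 1 / 2 * √S ^ 2 + 1 / n ^ 2 * ((n - 1) * (-a * M - c * M ^ (γ + 1))) := by
        rw [hM_rpow]; ring
    _ ≤ _ := by gcongr

theorem stmt14 (n : ℕ) (hn : 2 ≤ n) (a b : ℝ) (ha : 0 < a) (hb : 0 < b)
    (γ : ℝ) (hγ : γ ∈ Set.Ico (0:ℝ) 1)
    (F : ℝ → ℝ → ℝ)
    (hF : ∀ t ∈ Set.Icc (0:ℝ) 1, ∀ x : ℝ,
      F t x ≥ -a * |x| - (b/(γ+1)) * |x| ^ (γ+1))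
    (x : ℕ → ℝ) (hx0 : x 0 = 0) (hxn : x n = 0) :
    (∑ k ∈ Finset.Icc 1 n, (1/2) * (x k - x (k-1))^2)
        + (1/(n:ℝ)^2) * ∑ k ∈ Finset.Icc 1 (n-1), F ((k:ℝ)/n) (x k)
      ≥ (1/2) * (Real.sqrt (∑ k ∈ Finset.Icc 1 n, (x k - x (k-1))^2))^2
        - a * (Real.sqrt ((n:ℝ) - 1) / n)
          * Real.sqrt (∑ k ∈ Finset.Icc 1 n, (x k - x (k-1))^2)
        - (b/(γ+1)) * (n:ℝ) ^ ((γ - 1)/2)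
          * (Real.sqrt (∑ k ∈ Finset.Icc 1 n, (x k - x (k-1))^2)) ^ (γ+1) :=
  stmt14_general n hn a b ha hb γ hγ F hF x hx0
end
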